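/- Let u, v : [0,∞) → ℝ^J be two solutions of the Lorenz 96 equation with ‖u(t)‖ ≤ ρ and ‖v(t)‖ ≤ ρ for all t ≥ 0, where ρ = √(2J)·|F|, let δ(t) = v(t) − u(t), and assume β > 0 is such that ‖δ(t)‖² ≤ ‖δ(0)‖²·e^{2βt} for all t ≥ 0. Then for all t ≥ 0, ‖Πδ(t)‖² ≤ a₁(t)·‖δ(0)‖² + ‖Πδ(0)‖², where a₁(t) = (16ρ²/β)·(e^{2βt} − 1). -/

import Mathlib

/-! Write `δ = v - u` and `N = f(v) - f(u) + δ` for the Lorenz 96 field `f`. `N` is the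
difference of the quadratic parts, a sum of two terms bilinear in `(δ, v)` and in `(u, δ)`, so on
the ball of radius `ρ` each coordinate of `N` is controlled by three neighbouring coordinates of
`δ`, giving `‖N‖² ≤ 16ρ²‖δ‖²`. Since `Π` is linear and `Π(f(v) - f(u)) = ΠN - Πδ`, the damping term absorbs
the cross term: `d/dt ‖Πδ‖² = 2⟪Πδ, ΠN - Πδ⟫ ≤ ‖ΠN‖²/2 ≤ 8ρ²‖δ(0)‖² e^{2βt}`, and integrating
from `0` to `t` gives the bound. -/

/-- The Lorenz 96 vector field on `ℝ^J` with external forcing `F`,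
with coordinates indexed cyclically modulo `J`. -/
noncomputable def lorenz96 (J : ℕ) [NeZero J] (F : ℝ)
    (u : EuclideanSpace ℝ (Fin J)) : EuclideanSpace ℝ (Fin J) :=
  WithLp.toLp 2 (fun j => (u (j + 1) - u (j - 2)) * u (j - 1) - u j + F)

/-- The orthogonal projection of `ℝ^J` that keeps the coordinates whose
(1-based) index is not divisible by 3 and zeroes out every coordinate whose
(1-based) index is divisible by 3. -/
noncomputable def lorenz96Proj (J : ℕ)
    (u : EuclideanSpace ℝ (Fin J)) : EuclideanSpace ℝ (Fin J) :=
  WithLp.toLp 2 (fun j => if ((j : ℕ) + 1) % 3 = 0 then 0 else u j)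

open Real

theorem two_mul_inner_sub_self_le {E : Type*} [NormedAddCommGroup E] [InnerProductSpace ℝ E]
    (x y : E) : 2 * inner ℝ x (y - x) ≤ ‖y‖ ^ 2 / 2 := by
  have := norm_sub_sq_real y ((2 : ℝ) • x)
  rw [inner_smul_right, norm_smul, Real.norm_two] at this
  rw [inner_sub_right, real_inner_self_eq_norm_sq, real_inner_comm]
  nlinarith [sq_nonneg ‖y - (2 : ℝ) • x‖]

theorem sq_apply_le_of_norm_le {ι : Type*} [Fintype ι] {x : EuclideanSpace ℝ ι} {ρ : ℝ}
    (hx : ‖x‖ ≤ ρ) (i : ι) :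
    x i ^ 2 ≤ ρ ^ 2 :=
  sq_le_sq.2 ((PiLp.norm_apply_le x i).trans (hx.trans (le_abs_self ρ)))

theorem sum_sq_apply_add {ι : Type*} [Fintype ι] [AddGroup ι] (x : EuclideanSpace ℝ ι) (c : ι) :
    ∑ j, x (j + c) ^ 2 = ‖x‖ ^ 2 := by
  rw [EuclideanSpace.real_norm_sq_eq]
  exact Equiv.sum_comp (Equiv.addRight c) (fun j => x j ^ 2)

theorem sum_sq_apply_sub {ι : Type*} [Fintype ι] [AddGroup ι] (x : EuclideanSpace ℝ ι) (c : ι) :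
    ∑ j, x (j - c) ^ 2 = ‖x‖ ^ 2 := by
  simpa only [sub_eq_add_neg] using sum_sq_apply_add x (-c)

theorem sq_mul_add_mul_le {p q r b a₁ a₂ ρ : ℝ} (hb : b ^ 2 ≤ ρ ^ 2) (ha₁ : a₁ ^ 2 ≤ ρ ^ 2)
    (ha₂ : a₂ ^ 2 ≤ ρ ^ 2) :
    ((p - q) * b + (a₁ - a₂) * r) ^ 2 ≤ 4 * ρ ^ 2 * (p ^ 2 + q ^ 2 + 2 * r ^ 2) := by
  -- `(x + y)² ≤ 2x² + 2y²`, then `(p - q)² ≤ 2(p² + q²)` and `(a₁ - a₂)² ≤ 2(a₁² + a₂²)`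
  nlinarith [sq_nonneg ((p - q) * b - (a₁ - a₂) * r), sq_nonneg (p + q), sq_nonneg (a₁ + a₂),
    mul_le_mul_of_nonneg_left hb (sq_nonneg (p - q)),
    mul_le_mul_of_nonneg_right ha₁ (sq_nonneg r), mul_le_mul_of_nonneg_right ha₂ (sq_nonneg r)]

theorem le_add_div_mul_exp_sub_one_of_deriv_le {g g' : ℝ → ℝ} {C k t : ℝ} (hk : 0 < k)
    (hg : ∀ s, 0 ≤ s → HasDerivAt g (g' s) s) (hg' : ∀ s, 0 ≤ s → g' s ≤ C * exp (k * s))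
    (ht : 0 ≤ t) : g t ≤ g 0 + C / k * (exp (k * t) - 1) := by
  have hB : ∀ s, HasDerivAt (fun s => g 0 + C / k * (exp (k * s) - 1)) (C * exp (k * s)) s := by
    intro s
    have h := ((((hasDerivAt_id' s).const_mul k).exp.sub_const 1).const_mul (C / k)).const_add (g 0)
    exact h.congr_deriv (by field_simp)
  refine image_le_of_deriv_right_le_deriv_boundary (f' := g') (B' := fun s => C * exp (k * s))
    (fun s hs => (hg s hs.1).continuousAt.continuousWithinAt)
    (fun s hs => (hg s hs.1).hasDerivWithinAt) (by simp)
    (fun s _ => (hB s).continuousAt.continuousWithinAt) (fun s _ => (hB s).hasDerivWithinAt)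
    (fun s hs => hg' s hs.1) ⟨ht, le_rfl⟩

noncomputable def lorenz96ProjCLM (J : ℕ) :
    EuclideanSpace ℝ (Fin J) →L[ℝ] EuclideanSpace ℝ (Fin J) :=
  LinearMap.toContinuousLinearMap
    { toFun := lorenz96Proj J
      map_add' := fun x y => by ext j; by_cases h : ((j : ℕ) + 1) % 3 = 0 <;> simp [lorenz96Proj, h]
      map_smul' := fun c x => by
        ext j; by_cases h : ((j : ℕ) + 1) % 3 = 0 <;> simp [lorenz96Proj, h] }

theorem norm_lorenz96Proj_le {J : ℕ} (x : EuclideanSpace ℝ (Fin J)) :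
    ‖lorenz96Proj J x‖ ≤ ‖x‖ := by
  refine (pow_le_pow_iff_left₀ (norm_nonneg _) (norm_nonneg _) two_ne_zero).1 ?_
  simp only [EuclideanSpace.real_norm_sq_eq]
  refine Finset.sum_le_sum fun j _ => ?_
  simp only [lorenz96Proj, PiLp.toLp_apply]
  split_ifs <;> simp [sq_nonneg]

theorem lorenz96_sub_add_sub_apply {J : ℕ} [NeZero J] (F : ℝ) (a b : EuclideanSpace ℝ (Fin J))
    (j : Fin J) :
    (lorenz96 J F b - lorenz96 J F a + (b - a)) j =
      ((b - a) (j + 1) - (b - a) (j - 2)) * b (j - 1) +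
        (a (j + 1) - a (j - 2)) * (b - a) (j - 1) := by
  simp only [lorenz96, PiLp.add_apply, PiLp.sub_apply]
  ring

theorem norm_sq_lorenz96_sub_add_sub_le {J : ℕ} [NeZero J] (F : ℝ) {ρ : ℝ}
    {a b : EuclideanSpace ℝ (Fin J)} (ha : ‖a‖ ≤ ρ) (hb : ‖b‖ ≤ ρ) :
    ‖lorenz96 J F b - lorenz96 J F a + (b - a)‖ ^ 2 ≤ 16 * ρ ^ 2 * ‖b - a‖ ^ 2 := by
  set δ := b - a
  calc ‖lorenz96 J F b - lorenz96 J F a + δ‖ ^ 2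
      ≤ ∑ j, 4 * ρ ^ 2 * (δ (j + 1) ^ 2 + δ (j - 2) ^ 2 + 2 * δ (j - 1) ^ 2) := by
        rw [EuclideanSpace.real_norm_sq_eq]
        refine Finset.sum_le_sum fun j _ => ?_
        rw [lorenz96_sub_add_sub_apply]
        exact sq_mul_add_mul_le (sq_apply_le_of_norm_le hb _) (sq_apply_le_of_norm_le ha _)
          (sq_apply_le_of_norm_le ha _)
    _ = 16 * ρ ^ 2 * ‖δ‖ ^ 2 := by
        simp only [← Finset.mul_sum, Finset.sum_add_distrib, sum_sq_apply_add, sum_sq_apply_sub]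
        ring

theorem two_mul_inner_lorenz96Proj_sub_le {J : ℕ} [NeZero J] (F : ℝ) {ρ : ℝ}
    {a b : EuclideanSpace ℝ (Fin J)} (ha : ‖a‖ ≤ ρ) (hb : ‖b‖ ≤ ρ) :
    2 * inner ℝ (lorenz96Proj J (b - a)) (lorenz96Proj J (lorenz96 J F b - lorenz96 J F a))
      ≤ 8 * ρ ^ 2 * ‖b - a‖ ^ 2 := by
  set P := lorenz96ProjCLM J
  set N := lorenz96 J F b - lorenz96 J F a + (b - a)
  calc 2 * inner ℝ (P (b - a)) (P (lorenz96 J F b - lorenz96 J F a))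
      = 2 * inner ℝ (P (b - a)) (P N - P (b - a)) := by rw [← map_sub, add_sub_cancel_right]
    _ ≤ ‖P N‖ ^ 2 / 2 := two_mul_inner_sub_self_le _ _
    _ ≤ ‖N‖ ^ 2 / 2 := by gcongr; exact norm_lorenz96Proj_le N
    _ ≤ 16 * ρ ^ 2 * ‖b - a‖ ^ 2 / 2 := by
        gcongr; exact norm_sq_lorenz96_sub_add_sub_le F ha hb
    _ = 8 * ρ ^ 2 * ‖b - a‖ ^ 2 := by ring

theorem lorenz96_proj_err_sq_bound_general (J : ℕ) [NeZero J]
    (F : ℝ) (β : ℝ) (hβ : 0 < β)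
    (u v : ℝ → EuclideanSpace ℝ (Fin J))
    (hu : ∀ t : ℝ, 0 ≤ t → HasDerivAt u (lorenz96 J F (u t)) t)
    (hv : ∀ t : ℝ, 0 ≤ t → HasDerivAt v (lorenz96 J F (v t)) t)
    (hubd : ∀ t : ℝ, 0 ≤ t → ‖u t‖ ≤ Real.sqrt (2 * J) * |F|)
    (hvbd : ∀ t : ℝ, 0 ≤ t → ‖v t‖ ≤ Real.sqrt (2 * J) * |F|)
    (hgrow : ∀ t : ℝ, 0 ≤ t →
      ‖v t - u t‖ ^ 2 ≤ ‖v 0 - u 0‖ ^ 2 * Real.exp (2 * β * t)) :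
    ∀ t : ℝ, 0 ≤ t →
      ‖lorenz96Proj J (v t - u t)‖ ^ 2
        ≤ (16 * (Real.sqrt (2 * J) * |F|) ^ 2 / β) * (Real.exp (2 * β * t) - 1)
            * ‖v 0 - u 0‖ ^ 2
          + ‖lorenz96Proj J (v 0 - u 0)‖ ^ 2 := by
  intro t ht
  set ρ := Real.sqrt (2 * J) * |F|
  set P := lorenz96ProjCLM J
  have hderiv : ∀ s, 0 ≤ s → HasDerivAt (fun r => ‖P (v r - u r)‖ ^ 2)
      (2 * inner ℝ (P (v s - u s)) (P (lorenz96 J F (v s) - lorenz96 J F (u s)))) s :=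
    fun s hs => (P.hasFDerivAt.comp_hasDerivAt s ((hv s hs).sub (hu s hs))).norm_sq
  have hbound : ∀ s, 0 ≤ s →
      2 * inner ℝ (P (v s - u s)) (P (lorenz96 J F (v s) - lorenz96 J F (u s)))
        ≤ 8 * ρ ^ 2 * ‖v 0 - u 0‖ ^ 2 * exp (2 * β * s) := fun s hs =>
    calc _ ≤ 8 * ρ ^ 2 * ‖v s - u s‖ ^ 2 :=
          two_mul_inner_lorenz96Proj_sub_le F (hubd s hs) (hvbd s hs)
      _ ≤ 8 * ρ ^ 2 * (‖v 0 - u 0‖ ^ 2 * exp (2 * β * s)) := by gcongr; exact hgrow s hs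
      _ = _ := by ring
  have hint := le_add_div_mul_exp_sub_one_of_deriv_le (by positivity) hderiv hbound ht
  calc ‖P (v t - u t)‖ ^ 2
      ≤ ‖P (v 0 - u 0)‖ ^ 2 + 8 * ρ ^ 2 * ‖v 0 - u 0‖ ^ 2 / (2 * β) * (exp (2 * β * t) - 1) := hint
    _ = 4 * ρ ^ 2 / β * (exp (2 * β * t) - 1) * ‖v 0 - u 0‖ ^ 2 + ‖P (v 0 - u 0)‖ ^ 2 := by
        field_simp; ring
    _ ≤ 16 * ρ ^ 2 / β * (exp (2 * β * t) - 1) * ‖v 0 - u 0‖ ^ 2 + ‖P (v 0 - u 0)‖ ^ 2 := by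
        have : 0 ≤ exp (2 * β * t) - 1 := sub_nonneg.2 (one_le_exp (by positivity))
        gcongr
        norm_num

theorem lorenz96_proj_err_sq_bound (J J' : ℕ) [NeZero J]
    (hJ3 : J = 3 * J') (hJ4 : 4 ≤ J) (F : ℝ) (β : ℝ) (hβ : 0 < β)
    (u v : ℝ → EuclideanSpace ℝ (Fin J))
    (hu : ∀ t : ℝ, 0 ≤ t → HasDerivAt u (lorenz96 J F (u t)) t)
    (hv : ∀ t : ℝ, 0 ≤ t → HasDerivAt v (lorenz96 J F (v t)) t)
    (hubd : ∀ t : ℝ, 0 ≤ t → ‖u t‖ ≤ Real.sqrt (2 * J) * |F|)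
    (hvbd : ∀ t : ℝ, 0 ≤ t → ‖v t‖ ≤ Real.sqrt (2 * J) * |F|)
    (hgrow : ∀ t : ℝ, 0 ≤ t →
      ‖v t - u t‖ ^ 2 ≤ ‖v 0 - u 0‖ ^ 2 * Real.exp (2 * β * t)) :
    ∀ t : ℝ, 0 ≤ t →
      ‖lorenz96Proj J (v t - u t)‖ ^ 2
        ≤ (16 * (Real.sqrt (2 * J) * |F|) ^ 2 / β) * (Real.exp (2 * β * t) - 1)
            * ‖v 0 - u 0‖ ^ 2
          + ‖lorenz96Proj J (v 0 - u 0)‖ ^ 2 :=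
  lorenz96_proj_err_sq_bound_general J F β hβ u v hu hv hubd hvbd hgrow
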